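/- (Quantum memory bound.) Let q be a natural number and set d = 2^q (a memory of q qubits). Let ρ : ℝ → (d×d complex matrices) with each ρ(T) a density matrix, and let M : Set ℝ → (d×d complex matrices) satisfy: M(S) positive semidefinite for all S, M(ℝ) = I, and M(S ∪ S') = M(S) + M(S') for disjoint S, S'. Let T_min < T_max, P ∈ (0,1], δ > 0, and suppose Re Tr(M((T−δ/2, T+δ/2)) · ρ(T)) ≥ P for every T ∈ [T_min, T_max]. Then 2^q ≥ P·(T_max − T_min)/δ − 1; equivalently, the number of memory qubits satisfies q ≥ log₂(P·(T_max − T_min)/δ − 1) whenever the right-hand side is defined. -/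

import Mathlib

/-!
Place `N = ⌊(Tmax - Tmin) / δ⌋ + 1` grid points `δ` apart in `[Tmin, Tmax]`. Their open
`δ`-windows are disjoint, so by finite additivity the POVM elements of the windows sum to at
most `M ℝ = 1` in the Loewner order. Since `tr (A ρ) ≤ tr A` for `A ≥ 0` and a density matrix
`ρ` (because `1 - ρ ≥ 0`), each window contributes at least `P` to the trace of that sum, so
`N P ≤ tr 1 = 2^q`, and `N > (Tmax - Tmin) / δ`.
-/

open scoped ComplexOrder

section FinitelyAdditive

variable {α ι β : Type*} [AddCancelCommMonoid β] {m : Set α → β}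

lemma map_empty_of_map_union (hadd : ∀ S S', Disjoint S S' → m (S ∪ S') = m S + m S') :
    m ∅ = 0 := by
  simpa using hadd ∅ ∅ (Set.disjoint_empty _)

lemma map_biUnion_finset_of_map_union
    (hadd : ∀ S S', Disjoint S S' → m (S ∪ S') = m S + m S')
    {s : Finset ι} {f : ι → Set α} (hf : (s : Set ι).PairwiseDisjoint f) :
    m (⋃ i ∈ s, f i) = ∑ i ∈ s, m (f i) := by
  classical
  induction s using Finset.induction_on with
  | empty => simpa using map_empty_of_map_union hadd
  | insert j s hj ih =>
    rw [Finset.coe_insert] at hf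
    have hdisj : Disjoint (f j) (⋃ i ∈ s, f i) :=
      Set.disjoint_iUnion₂_right.mpr fun i hi =>
        hf (Set.mem_insert j _) (Set.mem_insert_of_mem j hi) (ne_of_mem_of_not_mem hi hj).symm
    rw [Finset.set_biUnion_insert, hadd _ _ hdisj, Finset.sum_insert hj,
      ih (hf.subset (Set.subset_insert j _))]

lemma sum_le_map_univ_of_map_union [PartialOrder β] [IsOrderedAddMonoid β]
    (hadd : ∀ S S', Disjoint S S' → m (S ∪ S') = m S + m S') (hm : ∀ S, 0 ≤ m S)
    {s : Finset ι} {f : ι → Set α} (hf : (s : Set ι).PairwiseDisjoint f) :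
    ∑ i ∈ s, m (f i) ≤ m Set.univ := by
  rw [← map_biUnion_finset_of_map_union hadd hf, ← Set.union_compl_self (⋃ i ∈ s, f i),
    hadd _ _ disjoint_compl_right]
  exact le_add_of_nonneg_right (hm _)

end FinitelyAdditive

namespace Matrix

variable {n 𝕜 : Type*} [Fintype n] [DecidableEq n] [RCLike 𝕜]

open scoped MatrixOrder

lemma PosSemidef.trace_mul_nonneg {A B : Matrix n n 𝕜} (hA : A.PosSemidef)
    (hB : B.PosSemidef) : 0 ≤ (A * B).trace := by
  set S := CFC.sqrt B
  have hS : Sᴴ = S := (nonneg_iff_posSemidef.mp (CFC.sqrt_nonneg B)).isHermitian.eq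
  have hSS : S * S = B := CFC.sqrt_mul_sqrt_self B hB.nonneg
  have : (A * B).trace = (S * A * Sᴴ).trace := by
    rw [hS, ← hSS, ← mul_assoc, trace_mul_comm, ← mul_assoc]
  exact this ▸ (hA.mul_mul_conjTranspose_same S).trace_nonneg

lemma PosSemidef.one_sub_of_trace_eq_one {ρ : Matrix n n 𝕜} (hρ : ρ.PosSemidef)
    (htr : ρ.trace = 1) : (1 - ρ).PosSemidef := by
  have hsum : ∑ i, hρ.1.eigenvalues i = 1 := by
    have := hρ.1.trace_eq_sum_eigenvalues
    rw [htr] at this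
    exact_mod_cast this.symm
  refine le_iff.mp (CFC.le_one (R := ℝ) (a := ρ) fun x hx => ?_)
  obtain ⟨i, rfl⟩ := hρ.1.spectrum_real_eq_range_eigenvalues ▸ hx
  exact hsum ▸ Finset.single_le_sum (fun j _ => hρ.eigenvalues_nonneg j) (Finset.mem_univ i)

lemma PosSemidef.trace_mul_le_trace {A ρ : Matrix n n 𝕜} (hA : A.PosSemidef)
    (hρ : ρ.PosSemidef) (htr : ρ.trace = 1) : (A * ρ).trace ≤ A.trace := by
  have := hA.trace_mul_nonneg (hρ.one_sub_of_trace_eq_one htr)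
  rwa [mul_sub, mul_one, trace_sub, sub_nonneg] at this

theorem card_mul_le_card_of_povm {α ι : Type*}
    {M : Set α → Matrix n n 𝕜} (hMpos : ∀ S, (M S).PosSemidef) (hMuniv : M Set.univ = 1)
    (hMadd : ∀ S S', Disjoint S S' → M (S ∪ S') = M S + M S')
    {s : Finset ι} {S : ι → Set α} (hS : (s : Set ι).PairwiseDisjoint S)
    {ρ : ι → Matrix n n 𝕜} (hρpos : ∀ i, (ρ i).PosSemidef) (hρtr : ∀ i, (ρ i).trace = 1)
    {P : ℝ} (hP : ∀ i ∈ s, P ≤ RCLike.re (M (S i) * ρ i).trace) :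
    s.card * P ≤ Fintype.card n := by
  have hsum : ∑ i ∈ s, M (S i) ≤ 1 :=
    hMuniv ▸ sum_le_map_univ_of_map_union hMadd (fun S => (hMpos S).nonneg) hS
  have htrace : ∑ i ∈ s, (M (S i) * ρ i).trace ≤ Fintype.card n := calc
    ∑ i ∈ s, (M (S i) * ρ i).trace ≤ ∑ i ∈ s, (M (S i)).trace :=
      Finset.sum_le_sum fun i _ => (hMpos _).trace_mul_le_trace (hρpos i) (hρtr i)
    _ ≤ (1 : Matrix n n 𝕜).trace := by
      rw [← trace_sum, ← sub_nonneg, ← trace_sub]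
      exact (le_iff.mp hsum).trace_nonneg
    _ = Fintype.card n := trace_one
  calc s.card * P = ∑ i ∈ s, P := by rw [Finset.sum_const, nsmul_eq_mul]
    _ ≤ ∑ i ∈ s, RCLike.re (M (S i) * ρ i).trace := Finset.sum_le_sum hP
    _ = RCLike.re (∑ i ∈ s, (M (S i) * ρ i).trace) := (map_sum _ _ _).symm
    _ ≤ Fintype.card n := by simpa using (RCLike.le_iff_re_im.mp htrace).1

end Matrix

open Function in
lemma pairwise_disjoint_Ioo_add_nat_mul (a δ : ℝ) :
    Pairwise (Disjoint on fun k : ℕ => Set.Ioo (a + k * δ - δ / 2) (a + k * δ + δ / 2)) := by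
  have hshift (k : ℕ) : Set.Ioo (a + k * δ - δ / 2) (a + k * δ + δ / 2) =
      Set.Ioo (a - δ / 2 + (k : ℤ) • δ) (a - δ / 2 + ((k : ℤ) + 1) • δ) := by
    push_cast [zsmul_eq_mul]
    ring_nf
  simp_rw [hshift]
  exact fun i j hij => Set.pairwise_disjoint_Ioo_add_zsmul (a - δ / 2) δ (by exact_mod_cast hij)

lemma add_nat_mul_mem_Icc {a b δ : ℝ} (hab : a ≤ b) (hδ : 0 < δ) {k : ℕ}
    (hk : k ≤ ⌊(b - a) / δ⌋₊) : a + k * δ ∈ Set.Icc a b := by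
  have hkδ : k * δ ≤ b - a := by
    have := (Nat.cast_le.mpr hk).trans (Nat.floor_le (div_nonneg (sub_nonneg.mpr hab) hδ.le))
    rwa [le_div_iff₀ hδ] at this
  constructor <;> nlinarith

lemma Real.logb_le_of_le_pow {b x : ℝ} {n : ℕ} (hb : 1 < b) (hx : -1 ≤ x) (hxn : x ≤ b ^ n) :
    logb b x ≤ n := by
  rcases eq_or_ne x 0 with rfl | hx0
  · simp
  rw [← logb_abs, logb_le_iff_le_rpow hb (abs_pos.mpr hx0), rpow_natCast, abs_le]
  exact ⟨by linarith [one_le_pow₀ (n := n) hb.le], hxn⟩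

/-- Quantum memory bound: if a parameter `T` is encoded in density
matrices on a memory of `q` qubits (dimension `2^q`) and a (finitely additive)
POVM on ℝ locates `T` within an interval of size `δ` with probability at least
`P` for every `T` in the fiducial interval, then `2^q ≥ P (T_max − T_min)/δ − 1`;
equivalently `q ≥ log₂(P (T_max − T_min)/δ − 1)`. -/
theorem stmt_2 (q : ℕ)
    (ρ : ℝ → Matrix (Fin (2^q)) (Fin (2^q)) ℂ)
    (hρpos : ∀ T, (ρ T).PosSemidef) (hρtr : ∀ T, (ρ T).trace = 1)
    (M : Set ℝ → Matrix (Fin (2^q)) (Fin (2^q)) ℂ)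
    (hMpos : ∀ S, (M S).PosSemidef) (hMuniv : M Set.univ = 1)
    (hMadd : ∀ S S' : Set ℝ, Disjoint S S' → M (S ∪ S') = M S + M S')
    (Tmin Tmax : ℝ) (hT : Tmin < Tmax) (P : ℝ) (hP : P ∈ Set.Ioc (0:ℝ) 1)
    (δ : ℝ) (hδ : 0 < δ)
    (hacc : ∀ T ∈ Set.Icc Tmin Tmax,
      P ≤ (Matrix.trace (M (Set.Ioo (T - δ/2) (T + δ/2)) * ρ T)).re) :
    P * (Tmax - Tmin) / δ - 1 ≤ (2^q : ℝ) ∧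
    Real.logb 2 (P * (Tmax - Tmin) / δ - 1) ≤ (q : ℝ) := by
  set N := ⌊(Tmax - Tmin) / δ⌋₊ + 1
  have hpacking : (N : ℝ) * P ≤ 2 ^ q := by
    simpa using Matrix.card_mul_le_card_of_povm hMpos hMuniv hMadd (s := Finset.range N)
      ((pairwise_disjoint_Ioo_add_nat_mul Tmin δ).set_pairwise _)
      (fun k => hρpos (Tmin + k * δ)) (fun k => hρtr _) fun k hk =>
        hacc _ (add_nat_mul_mem_Icc hT.le hδ (Nat.lt_succ_iff.mp (Finset.mem_range.mp hk)))
  have hbound : P * (Tmax - Tmin) / δ ≤ 2 ^ q := calc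
    P * (Tmax - Tmin) / δ = P * ((Tmax - Tmin) / δ) := mul_div_assoc _ _ _
    _ ≤ P * N := mul_le_mul_of_nonneg_left (by simpa [N] using (Nat.lt_floor_add_one _).le) hP.1.le
    _ ≤ 2 ^ q := by linarith
  have hpos : 0 < P * (Tmax - Tmin) / δ := div_pos (mul_pos hP.1 (sub_pos.mpr hT)) hδ
  exact ⟨by linarith, Real.logb_le_of_le_pow one_lt_two (by linarith) (by linarith)⟩
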